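/- arXiv:0910.2424 — 2 statements merged into one kernel-verified Lean document; each statement's English description precedes it below -/
import Mathlib

section
/- The 2×2 minors of the generic s × t matrix of indeterminates generate the homogeneous prime ideal of the Segre embedding of P^{s−1} × P^{t−1} in P^{st−1}. -/
/-!
`segreMap` sends the monomial `x^d` to the monomial whose exponents are the row and column sums
of the matrix `d`, so its kernel is spanned by the binomials `x^d - x^{d'}` where `d` and `d'` have
the same row and column sums. Such a binomial lies in the ideal of `2 × 2` minors by induction on
the degree: if `d_{ij} > 0`, then row `i` and column `j` of `d'` are nonzero, so either
`d'_{ij} > 0` or `d'_{ij'}, d'_{i'j} > 0` for some `i' ≠ i`, `j' ≠ j`, and one minor trades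
`x_{ij'} x_{i'j}` for `x_{ij} x_{i'j'}`; after that `x_{ij}` divides both monomials and cancels.
-/

noncomputable section

open MvPolynomial

/-- The ring map `k[x_{ij}] → k[a_1,…,a_s, b_1,…,b_t]` sending `x_{ij} ↦ a_i b_j`; its
kernel is the homogeneous (prime) ideal of the Segre embedding of
`P^{s−1} × P^{t−1}` in `P^{st−1}`. -/
def segreMap (k : Type) [Field k] (s t : ℕ) :
    MvPolynomial (Fin s × Fin t) k →ₐ[k] MvPolynomial (Fin s ⊕ Fin t) k :=
  aeval (fun p => X (Sum.inl p.1) * X (Sum.inr p.2))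

namespace MvPolynomial

variable {R σ τ : Type*}

theorem aeval_monomial_of_monomials [CommSemiring R] (g : σ → τ →₀ ℕ) (d : σ →₀ ℕ) (c : R) :
    aeval (fun i => monomial (g i) (1 : R)) (monomial d c) =
      monomial (Finsupp.linearCombination ℕ g d) c := by
  simp only [aeval_monomial, monomial_pow, one_pow, algebraMap_eq,
    Finsupp.linearCombination_apply, monomial_finsupp_sum_index]

theorem ker_le_span_binomials [CommRing R] (φ : MvPolynomial σ R →+* MvPolynomial τ R)
    (e : (σ →₀ ℕ) → τ →₀ ℕ) (hφ : ∀ d c, φ (monomial d c) = monomial (e d) c) :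
    RingHom.ker φ ≤
      Ideal.span {q | ∃ d d', e d = e d' ∧ q = monomial d (1 : R) - monomial d' 1} := by
  -- `ψ ∘ φ` replaces each `x^d` by `x^{d₀}` for one fixed `d₀` in the fibre of `e` over `e d`.
  let ψ := (basisMonomials τ R).constr R fun E => monomial (Function.invFun e E) (1 : R)
  have hψ (E : τ →₀ ℕ) (c : R) : ψ (monomial E c) = monomial (Function.invFun e E) c := by
    rw [← mul_one c, ← smul_eq_mul, ← smul_monomial, map_smul, ← smul_monomial]
    exact congrArg (c • ·) ((basisMonomials τ R).constr_basis R _ E)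
  have key (f : MvPolynomial σ R) : f - ψ (φ f) ∈
      Ideal.span {q | ∃ d d', e d = e d' ∧ q = monomial d (1 : R) - monomial d' 1} := by
    induction f using induction_on' with
    | monomial d c =>
      rw [hφ, hψ, ← mul_one c, ← C_mul_monomial, ← C_mul_monomial, ← mul_sub]
      exact Ideal.mul_mem_left _ _ <| Ideal.subset_span
        ⟨d, _, (Function.invFun_eq ⟨d, rfl⟩).symm, rfl⟩
    | add p q hp hq =>
      rw [map_add, map_add, add_sub_add_comm]
      exact Ideal.add_mem _ hp hq
  intro f hf
  simpa [RingHom.mem_ker.1 hf] using key f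

end MvPolynomial

theorem Finsupp.exists_eq_single_one_add {α : Type*} {d : α →₀ ℕ} {a : α} (h : d a ≠ 0) :
    ∃ c, d = Finsupp.single a 1 + c :=
  exists_add_of_le (Finsupp.single_le_iff.2 (Nat.one_le_iff_ne_zero.2 h))

section Segre

variable {R σ τ : Type*}

def segreExponent : (σ × τ →₀ ℕ) →ₗ[ℕ] σ ⊕ τ →₀ ℕ :=
  Finsupp.linearCombination ℕ fun p =>
    Finsupp.single (Sum.inl p.1) 1 + Finsupp.single (Sum.inr p.2) 1

theorem segreExponent_single (p : σ × τ) :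
    segreExponent (Finsupp.single p 1) =
      Finsupp.single (Sum.inl p.1) 1 + Finsupp.single (Sum.inr p.2) 1 := by
  simp [segreExponent]

theorem degree_segreExponent (d : σ × τ →₀ ℕ) : (segreExponent d).degree = 2 * d.degree := by
  induction d using Finsupp.induction_linear with
  | zero => simp
  | add d d' hd hd' => simp [hd, hd', mul_add]
  | single p n => simp [segreExponent, two_mul]

theorem segreExponent_inl_ne_zero_iff (d : σ × τ →₀ ℕ) (i : σ) :
    segreExponent d (Sum.inl i) ≠ 0 ↔ ∃ j, d (i, j) ≠ 0 := by
  simp [segreExponent, Finsupp.linearCombination_apply, Finsupp.sum, Finsupp.single_apply_ne_zero]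

theorem segreExponent_inr_ne_zero_iff (d : σ × τ →₀ ℕ) (j : τ) :
    segreExponent d (Sum.inr j) ≠ 0 ↔ ∃ i, d (i, j) ≠ 0 := by
  simp [segreExponent, Finsupp.linearCombination_apply, Finsupp.sum, Finsupp.single_apply_ne_zero]

variable (R σ τ) in
def twoByTwoMinors [CommRing R] : Set (MvPolynomial (σ × τ) R) :=
  {q | ∃ (i i' : σ) (j j' : τ), q = X (i, j) * X (i', j') - X (i, j') * X (i', j)}

variable [CommRing R]

theorem monomial_exchange_sub_mem_span_twoByTwoMinors (c : σ × τ →₀ ℕ) (i i' : σ) (j j' : τ) :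
    monomial (Finsupp.single (i, j) 1 + (Finsupp.single (i', j') 1 + c)) (1 : R) -
        monomial (Finsupp.single (i, j') 1 + (Finsupp.single (i', j) 1 + c)) 1 ∈
      Ideal.span (twoByTwoMinors R σ τ) := by
  have h : monomial (Finsupp.single (i, j) 1 + (Finsupp.single (i', j') 1 + c)) (1 : R) -
        monomial (Finsupp.single (i, j') 1 + (Finsupp.single (i', j) 1 + c)) 1 =
      (X (i, j) * X (i', j') - X (i, j') * X (i', j)) * monomial c 1 := by
    simp only [X, monomial_mul, sub_mul, add_assoc, one_mul]
  rw [h]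
  exact Ideal.mul_mem_right _ _ (Ideal.subset_span ⟨i, i', j, j', rfl⟩)

theorem exists_single_one_add_segreExponent_eq {d : σ × τ →₀ ℕ} {i : σ} {j : τ}
    (hi : segreExponent d (Sum.inl i) ≠ 0) (hj : segreExponent d (Sum.inr j) ≠ 0) :
    ∃ b, segreExponent (Finsupp.single (i, j) 1 + b) = segreExponent d ∧
      monomial (Finsupp.single (i, j) 1 + b) (1 : R) - monomial d 1 ∈
        Ideal.span (twoByTwoMinors R σ τ) := by
  by_cases hij : d (i, j) = 0
  · obtain ⟨j', hj'⟩ := (segreExponent_inl_ne_zero_iff d i).1 hi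
    obtain ⟨i', hi'⟩ := (segreExponent_inr_ne_zero_iff d j).1 hj
    have hne : (i, j') ≠ (i', j) := by
      rintro ⟨rfl, rfl⟩
      exact hj' hij
    obtain ⟨c₁, rfl⟩ := Finsupp.exists_eq_single_one_add hj'
    obtain ⟨c, rfl⟩ := Finsupp.exists_eq_single_one_add (a := (i', j)) (d := c₁) <| by
      simpa [Finsupp.single_apply, hne] using hi'
    refine ⟨Finsupp.single (i', j') 1 + c, ?_,
      monomial_exchange_sub_mem_span_twoByTwoMinors c i i' j j'⟩
    simp only [map_add, segreExponent_single]
    abel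
  · obtain ⟨b, rfl⟩ := Finsupp.exists_eq_single_one_add hij
    exact ⟨b, rfl, by simp⟩

theorem monomial_sub_mem_span_twoByTwoMinors {d d' : σ × τ →₀ ℕ}
    (h : segreExponent d = segreExponent d') :
    monomial d (1 : R) - monomial d' 1 ∈ Ideal.span (twoByTwoMinors R σ τ) := by
  obtain ⟨n, hn⟩ : ∃ n, d.degree = n := ⟨_, rfl⟩
  induction n generalizing d d' with
  | zero =>
    have hd' : d'.degree = 0 := by
      have := degree_segreExponent d'
      rw [← h, degree_segreExponent, hn] at this
      omega
    rw [Finsupp.degree_eq_zero_iff] at hn hd'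
    simp [hn, hd']
  | succ n ih =>
    obtain ⟨⟨i, j⟩, hij⟩ : ∃ p, d p ≠ 0 :=
      Finsupp.ne_iff.1 (show d ≠ 0 by rintro rfl; simp at hn)
    obtain ⟨a, rfl⟩ := Finsupp.exists_eq_single_one_add hij
    obtain ⟨b, hb, hmem⟩ := exists_single_one_add_segreExponent_eq (R := R)
      (h ▸ (segreExponent_inl_ne_zero_iff _ i).2 ⟨j, hij⟩)
      (h ▸ (segreExponent_inr_ne_zero_iff _ j).2 ⟨i, hij⟩)
    have hab : segreExponent a = segreExponent b := by
      rw [← h, map_add, map_add] at hb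
      exact (add_left_cancel hb).symm
    have ha : a.degree = n := by
      simp only [map_add, Finsupp.degree_single] at hn
      omega
    have hsplit : monomial (Finsupp.single (i, j) 1 + a) (1 : R) - monomial d' 1 =
        X (i, j) * (monomial a 1 - monomial b 1) +
          (monomial (Finsupp.single (i, j) 1 + b) 1 - monomial d' 1) := by
      simp only [X, monomial_mul, mul_sub, one_mul]
      ring
    rw [hsplit]
    exact Ideal.add_mem _ (Ideal.mul_mem_left _ _ (ih hab ha)) hmem

end Segre

theorem segreMap_monomial (k : Type) [Field k] (s t : ℕ) (d : Fin s × Fin t →₀ ℕ) (c : k) :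
    segreMap k s t (monomial d c) = monomial (segreExponent d) c := by
  have h : segreMap k s t = aeval fun p =>
      monomial (Finsupp.single (Sum.inl p.1) 1 + Finsupp.single (Sum.inr p.2) 1) (1 : k) := by
    simp only [segreMap, X, monomial_mul, one_mul]
  rw [h, aeval_monomial_of_monomials]
  rfl

/-- The `2 × 2` minors of the generic `s × t` matrix of indeterminates
`(x_{ij})` generate the homogeneous prime ideal of the Segre embedding of
`P^{s−1} × P^{t−1}` in `P^{st−1}`. -/
theorem segre_ideal_eq_minors (k : Type) [Field k] (s t : ℕ) :
    RingHom.ker (segreMap k s t).toRingHom =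
      Ideal.span {q : MvPolynomial (Fin s × Fin t) k |
        ∃ (i i' : Fin s) (j j' : Fin t),
          q = X (i, j) * X (i', j') - X (i, j') * X (i', j)} := by
  refine le_antisymm ?_ (Ideal.span_le.2 ?_)
  · refine (ker_le_span_binomials _ segreExponent (segreMap_monomial k s t)).trans
      (Ideal.span_le.2 ?_)
    rintro _ ⟨d, d', h, rfl⟩
    exact monomial_sub_mem_span_twoByTwoMinors h
  · rintro _ ⟨i, i', j, j', rfl⟩
    simp only [SetLike.mem_coe, RingHom.mem_ker, AlgHom.toRingHom_eq_coe, RingHom.coe_coe,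
      map_sub, map_mul, segreMap, aeval_X]
    ring

end
end

section
/- Let X = P¹ × P¹ × P¹ with total coordinate ring k[x_{1,0},x_{1,1},x_{2,0},x_{2,1},x_{3,0},x_{3,1}], embedded in P¹¹ by the 12 monomials of multidegree (2,1,1). Then the toric ideal of this embedding is generated by the 2×2 minors of the 4×4 matrix [[y₀,y₁,y₄,y₅],[y₂,y₃,y₆,y₇],[y₄,y₅,y₈,y₉],[y₆,y₇,y₁₀,y₁₁]]; in particular O_X(2,1,1) is determinantally presented. -/
noncomputable section

open MvPolynomial

/-- The six Cox-ring variables of `X = P¹ × P¹ × P¹`: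
`0 ↦ x_{1,0}, 1 ↦ x_{1,1}, 2 ↦ x_{2,0}, 3 ↦ x_{2,1}, 4 ↦ x_{3,0}, 5 ↦ x_{3,1}`,
and the twelve monomials of multidegree `(2,1,1)` in the order of the paper. -/
def mon211 (k : Type) [Field k] : Fin 12 → MvPolynomial (Fin 6) k :=
  ![X 0 ^ 2 * X 2 * X 4, X 0 ^ 2 * X 2 * X 5, X 0 ^ 2 * X 3 * X 4, X 0 ^ 2 * X 3 * X 5,
    X 0 * X 1 * X 2 * X 4, X 0 * X 1 * X 2 * X 5, X 0 * X 1 * X 3 * X 4,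
    X 0 * X 1 * X 3 * X 5,
    X 1 ^ 2 * X 2 * X 4, X 1 ^ 2 * X 2 * X 5, X 1 ^ 2 * X 3 * X 4, X 1 ^ 2 * X 3 * X 5]

/-- The ring map `k[y₀,…,y₁₁] → k[x_{1,0},…,x_{3,1}]` sending `y_i` to the `i`-th
monomial of multidegree `(2,1,1)`; its kernel is the toric ideal of the embedding of
`P¹ × P¹ × P¹` in `P¹¹` by `|O_X(2,1,1)|`. -/
def embed211 (k : Type) [Field k] : MvPolynomial (Fin 12) k →ₐ[k] MvPolynomial (Fin 6) k :=
  aeval (mon211 k)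

/-- The index matrix of the `4 × 4` matrix
`[[y₀,y₁,y₄,y₅],[y₂,y₃,y₆,y₇],[y₄,y₅,y₈,y₉],[y₆,y₇,y₁₀,y₁₁]]` arising from the
factorization `O_X(2,1,1) = O_X(1,1,0) ⊗ O_X(1,0,1)`. -/
def omegaIdx : Fin 4 → Fin 4 → Fin 12 :=
  ![![0, 1, 4, 5], ![2, 3, 6, 7], ![4, 5, 8, 9], ![6, 7, 10, 11]]

/-!
The map `y_f ↦ mon211 k f` sends monomials to monomials, so its kernel is spanned by differences
of monomials with the same image, and it suffices to show that two such monomials agree modulo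
the minors. Record `y_f` by the exponents `(a, b, c)` of `x_{1,1}, x_{2,1}, x_{3,1}` in its
image. A finite search shows that every quadratic monomial `y_f y_g` is congruent to `y_t y_h`,
where `t` takes as much of `a`, `b`, `c` as it can. Inserting the factors of an arbitrary monomial
one at a time, it becomes congruent to `y_t` times a monomial of lower degree, with `t` depending
only on the image; induction on the degree finishes.
-/

section Toric

variable {σ τ R : Type*} [CommRing R]

theorem monomial_one_eq_prod_toMultiset_map_X (u : σ →₀ ℕ) :
    monomial u (1 : R) = (u.toMultiset.map X).prod := by
  rw [Finsupp.toMultiset_map, Finsupp.prod_toMultiset,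
    Finsupp.prod_mapDomain_index (fun _ => pow_zero _) (fun _ _ _ => pow_add _ _ _),
    monomial_eq, C_1, one_mul]

theorem exists_map_prod_X_eq_monomial (φ : MvPolynomial σ R →ₐ[R] MvPolynomial τ R)
    (hφ : ∀ i, ∃ d, φ (X i) = monomial d 1) (m : Multiset σ) :
    ∃ d, φ (m.map X).prod = monomial d 1 := by
  induction m using Multiset.induction_on with
  | empty => exact ⟨0, by simp⟩
  | cons i m ih =>
    obtain ⟨d, hd⟩ := hφ i
    obtain ⟨e, he⟩ := ih
    exact ⟨d + e, by
      rw [Multiset.map_cons, Multiset.prod_cons, map_mul, hd, he, monomial_mul, one_mul]⟩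

theorem ker_le_of_forall_prod_X_sub_mem (φ : MvPolynomial σ R →ₐ[R] MvPolynomial τ R)
    (hφ : ∀ i, ∃ d, φ (X i) = monomial d 1) {J : Ideal (MvPolynomial σ R)}
    (hJ : ∀ m₁ m₂ : Multiset σ, φ (m₁.map X).prod = φ (m₂.map X).prod →
      (m₁.map X).prod - (m₂.map X).prod ∈ J) :
    RingHom.ker φ ≤ J := by
  -- `ψ` lifts each monomial in the image of `φ` to a chosen preimage monomial; on `ker φ`,
  -- `f - ψ (φ f)` is just `f`.
  let rep := Function.invFun fun m : Multiset σ => φ (m.map X).prod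
  let ψ : MvPolynomial τ R →ₗ[R] MvPolynomial σ R :=
    (basisMonomials τ R).constr R fun d => ((rep (monomial d 1)).map X).prod
  have hψ : ∀ f, f - ψ (φ f) ∈ J := by
    intro f
    induction f using MvPolynomial.induction_on' with
    | monomial u c =>
      obtain ⟨d, hd⟩ := exists_map_prod_X_eq_monomial φ hφ u.toMultiset
      have hrep : φ ((rep (monomial d 1)).map X).prod = φ (u.toMultiset.map X).prod :=
        (Function.invFun_eq (f := fun m : Multiset σ => φ (m.map X).prod) ⟨_, hd⟩).trans hd.symm
      have hu : monomial u c = c • (u.toMultiset.map X).prod := by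
        rw [← monomial_one_eq_prod_toMultiset_map_X, smul_monomial, smul_eq_mul, mul_one]
      have hψd : ψ (monomial d 1) = ((rep (monomial d 1)).map X).prod := by
        simpa [coe_basisMonomials] using (basisMonomials τ R).constr_basis R _ d
      rw [hu, map_smul, hd, map_smul, hψd, ← smul_sub, smul_eq_C_mul]
      exact J.mul_mem_left _ (hJ _ _ hrep.symm)
    | add p q hp hq =>
      rw [map_add, map_add, add_sub_add_comm]
      exact J.add_mem hp hq
  intro f hf
  simpa [(RingHom.mem_ker).mp hf] using hψ f

end Toric

section Minors

variable (R : Type*) {σ ι κ : Type*} [CommRing R]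

def minorIdeal (ω : ι → κ → σ) : Ideal (MvPolynomial σ R) :=
  Ideal.span {q | ∃ (i i' : ι) (j j' : κ), q = X (ω i j) * X (ω i' j') - X (ω i j') * X (ω i' j)}

variable {R}

theorem mk_minorIdeal_X_mul_X (ω : ι → κ → σ) (i i' : ι) (j j' : κ) :
    Ideal.Quotient.mk (minorIdeal R ω) (X (ω i j) * X (ω i' j')) =
      Ideal.Quotient.mk (minorIdeal R ω) (X (ω i j') * X (ω i' j)) :=
  Ideal.Quotient.eq.mpr (Ideal.subset_span ⟨i, i', j, j', rfl⟩)

variable [DecidableEq σ] {m n : ℕ}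

def minorLifts (ω : Fin m → Fin n → σ) (s : σ) : List (Fin m × Fin n) :=
  (List.finRange m ×ˢ List.finRange n).filter fun q => ω q.1 q.2 = s

def minorMoves (ω : Fin m → Fin n → σ) (p : σ × σ) : List (σ × σ) :=
  p :: (minorLifts ω p.1 ×ˢ minorLifts ω p.2).map fun q => (ω q.1.1 q.2.2, ω q.2.1 q.1.2)

def minorReach (ω : Fin m → Fin n → σ) : ℕ → σ × σ → List (σ × σ)
  | 0, p => [p]
  | k + 1, p => (minorReach ω k p).flatMap (minorMoves ω)

theorem eq_of_mem_minorLifts {ω : Fin m → Fin n → σ} {s : σ} {q : Fin m × Fin n}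
    (h : q ∈ minorLifts ω s) : ω q.1 q.2 = s := by
  simpa using (List.mem_filter.mp h).2

theorem mk_X_mul_X_eq_of_mem_minorMoves {ω : Fin m → Fin n → σ} {p q : σ × σ}
    (h : q ∈ minorMoves ω p) :
    Ideal.Quotient.mk (minorIdeal R ω) (X p.1 * X p.2) =
      Ideal.Quotient.mk (minorIdeal R ω) (X q.1 * X q.2) := by
  rcases List.mem_cons.mp h with rfl | h
  · rfl
  obtain ⟨⟨⟨i, j⟩, ⟨i', j'⟩⟩, hl, rfl⟩ := List.mem_map.mp h
  obtain ⟨h₁, h₂⟩ := List.mem_product.mp hl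
  rw [← eq_of_mem_minorLifts h₁, ← eq_of_mem_minorLifts h₂]
  exact mk_minorIdeal_X_mul_X ω i i' j j'

theorem mk_X_mul_X_eq_of_mem_minorReach {ω : Fin m → Fin n → σ} {p q : σ × σ} {k : ℕ}
    (h : q ∈ minorReach ω k p) :
    Ideal.Quotient.mk (minorIdeal R ω) (X p.1 * X p.2) =
      Ideal.Quotient.mk (minorIdeal R ω) (X q.1 * X q.2) := by
  induction k generalizing q with
  | zero => rw [List.mem_singleton.mp h]
  | succ k ih =>
    obtain ⟨r, hr, hq⟩ := List.mem_flatMap.mp h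
    exact (ih hr).trans (mk_X_mul_X_eq_of_mem_minorMoves hq)

end Minors

section LeadingIndex

-- `y_f` is sent to the monomial with exponents `a = f / 4`, `b = f / 2 % 2`, `c = f % 2` of
-- `x_{1,1}`, `x_{2,1}`, `x_{3,1}` (`embed211_X`); `ofExps` recovers `f` from `(a, b, c)`.
def ofExps (a b c : ℕ) : Fin 12 := ⟨(4 * a + 2 * b + c) % 12, Nat.mod_lt _ (by norm_num)⟩

def expVec (f : Fin 12) : Fin 6 → ℕ :=
  ![2 - f / 4, f / 4, 1 - f / 2 % 2, f / 2 % 2, 1 - f % 2, f % 2]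

def expSum (m : Multiset (Fin 12)) : Fin 6 → ℕ := (m.map expVec).sum

def leadingIndex (w : Fin 6 → ℕ) : Fin 12 := ofExps (min 2 (w 1)) (min 1 (w 3)) (min 1 (w 5))

theorem leadingIndex_expVec : ∀ f, leadingIndex (expVec f) = f := by decide

theorem expVec_add_minor : ∀ i i' j j' : Fin 4,
    expVec (omegaIdx i j) + expVec (omegaIdx i' j') =
      expVec (omegaIdx i j') + expVec (omegaIdx i' j) := by
  decide

-- Three moves are needed, e.g. for `(f, g) = (1, 10)`.
theorem exists_minorReach_leadingIndex : ∀ f g : Fin 12,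
    ∃ r ∈ minorReach omegaIdx 3 (f, g),
      (r.1 = leadingIndex (expVec f + expVec g) ∨ r.2 = leadingIndex (expVec f + expVec g)) ∧
      expVec r.1 + expVec r.2 = expVec f + expVec g := by
  decide

theorem expVec_leadingIndex (w : Fin 6 → ℕ) :
    expVec (leadingIndex w) 1 = min 2 (w 1) ∧ expVec (leadingIndex w) 3 = min 1 (w 3) ∧
      expVec (leadingIndex w) 5 = min 1 (w 5) := by
  simp only [expVec, leadingIndex, ofExps, Nat.reduceDvd, Nat.mod_mod_of_dvd, Matrix.cons_val_one,
    Matrix.cons_val_zero, Matrix.cons_val]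
  omega

theorem leadingIndex_add_expVec_leadingIndex (v w : Fin 6 → ℕ) :
    leadingIndex (v + expVec (leadingIndex w)) = leadingIndex (v + w) := by
  obtain ⟨h₁, h₃, h₅⟩ := expVec_leadingIndex w
  simp only [leadingIndex.eq_def (v + _), Pi.add_apply, h₁, h₃, h₅]
  congr 1 <;> omega

@[simp]
theorem expSum_zero : expSum 0 = 0 := by simp [expSum]

@[simp]
theorem expSum_cons (f : Fin 12) (m : Multiset (Fin 12)) :
    expSum (f ::ₘ m) = expVec f + expSum m := by
  simp [expSum]

theorem card_eq_expSum (m : Multiset (Fin 12)) : m.card = expSum m 2 + expSum m 3 := by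
  induction m using Multiset.induction_on with
  | empty => simp
  | cons f m ih =>
    have : expVec f 2 + expVec f 3 = 1 := by revert f; decide
    simp only [Multiset.card_cons, expSum_cons, Pi.add_apply]
    omega

theorem card_eq_of_expSum_eq {m₁ m₂ : Multiset (Fin 12)} (h : expSum m₁ = expSum m₂) :
    m₁.card = m₂.card := by
  rw [card_eq_expSum, card_eq_expSum, h]

variable {R : Type*} [CommRing R]

theorem exists_mk_X_mul_X_eq_leadingIndex (f g : Fin 12) :
    ∃ h, Ideal.Quotient.mk (minorIdeal R omegaIdx) (X f * X g) =
        Ideal.Quotient.mk (minorIdeal R omegaIdx)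
          (X (leadingIndex (expVec f + expVec g)) * X h) ∧
      expVec (leadingIndex (expVec f + expVec g)) + expVec h = expVec f + expVec g := by
  obtain ⟨⟨a, b⟩, hr, hlead, hw⟩ := exists_minorReach_leadingIndex f g
  have hmk : Ideal.Quotient.mk (minorIdeal R omegaIdx) (X f * X g) =
      Ideal.Quotient.mk (minorIdeal R omegaIdx) (X a * X b) :=
    mk_X_mul_X_eq_of_mem_minorReach (p := (f, g)) (q := (a, b)) hr
  rcases hlead with hlead | hlead <;> rw [← hlead]
  · exact ⟨b, hmk, hw⟩
  · exact ⟨a, hmk.trans (by rw [mul_comm]), (add_comm _ _).trans hw⟩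

theorem exists_mk_prod_eq_leadingIndex_cons (f : Fin 12) (m : Multiset (Fin 12)) :
    ∃ r, Ideal.Quotient.mk (minorIdeal R omegaIdx) ((f ::ₘ m).map X).prod =
        Ideal.Quotient.mk (minorIdeal R omegaIdx)
          ((leadingIndex (expSum (f ::ₘ m)) ::ₘ r).map X).prod ∧
      expSum (leadingIndex (expSum (f ::ₘ m)) ::ₘ r) = expSum (f ::ₘ m) := by
  induction m using Multiset.induction_on generalizing f with
  | empty =>
    exact ⟨0, by simp only [expSum_cons, expSum_zero, add_zero, leadingIndex_expVec, and_self]⟩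
  | cons g m ih =>
    obtain ⟨r, hr, hw⟩ := ih g
    set h := leadingIndex (expSum (g ::ₘ m))
    obtain ⟨h', hp, hpw⟩ := exists_mk_X_mul_X_eq_leadingIndex (R := R) f h
    have hl : leadingIndex (expVec f + expVec h) = leadingIndex (expSum (f ::ₘ g ::ₘ m)) := by
      rw [expSum_cons f, leadingIndex_add_expVec_leadingIndex]
    rw [hl] at hp hpw
    set t := leadingIndex (expSum (f ::ₘ g ::ₘ m))
    refine ⟨h' ::ₘ r, ?_, ?_⟩
    · simp only [Multiset.map_cons, Multiset.prod_cons, map_mul] at hr hp ⊢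
      rw [hr, ← mul_assoc, hp, mul_assoc]
    · simp only [expSum_cons] at hw hpw ⊢
      rw [← add_assoc, hpw, add_assoc, hw]

theorem mk_prod_X_eq_of_expSum_eq {m₁ m₂ : Multiset (Fin 12)} (h : expSum m₁ = expSum m₂) :
    Ideal.Quotient.mk (minorIdeal R omegaIdx) (m₁.map X).prod =
      Ideal.Quotient.mk (minorIdeal R omegaIdx) (m₂.map X).prod := by
  induction hn : m₁.card generalizing m₁ m₂ with
  | zero =>
    rw [Multiset.card_eq_zero.mp hn,
      Multiset.card_eq_zero.mp ((card_eq_of_expSum_eq h).symm.trans hn)]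
  | succ n ih =>
    obtain ⟨f, s₁, rfl, -⟩ := Multiset.card_eq_succ_iff.mp hn
    obtain ⟨g, s₂, rfl, -⟩ :=
      Multiset.card_eq_succ_iff.mp ((card_eq_of_expSum_eq h).symm.trans hn)
    obtain ⟨r₁, e₁, w₁⟩ := exists_mk_prod_eq_leadingIndex_cons (R := R) f s₁
    obtain ⟨r₂, e₂, w₂⟩ := exists_mk_prod_eq_leadingIndex_cons (R := R) g s₂
    have hc : r₁.card = n := by
      simpa [hn] using card_eq_of_expSum_eq w₁
    rw [h] at e₁ w₁
    have hr : expSum r₁ = expSum r₂ := by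
      have := w₁.trans w₂.symm
      simp only [expSum_cons] at this
      exact add_left_cancel this
    rw [e₁, e₂]
    simp only [Multiset.map_cons, Multiset.prod_cons, map_mul, ih hr hc]

end LeadingIndex

section Embedding

variable {k : Type} [Field k]

theorem embed211_X (f : Fin 12) :
    embed211 k (X f) = monomial (Finsupp.equivFunOnFinite.symm (expVec f)) 1 := by
  rw [embed211, aeval_X, monomial_eq, C_1, one_mul,
    Finsupp.prod_fintype _ _ fun _ => pow_zero _]
  fin_cases f <;> simp [mon211, expVec, Fin.prod_univ_six]

theorem embed211_prod (m : Multiset (Fin 12)) :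
    embed211 k (m.map X).prod = monomial (Finsupp.equivFunOnFinite.symm (expSum m)) 1 := by
  induction m using Multiset.induction_on with
  | empty =>
    rw [Multiset.map_zero, Multiset.prod_zero, map_one, expSum_zero]
    exact one_def.trans (congrArg (monomial · 1) (Finsupp.ext fun _ => rfl))
  | cons f m ih =>
    rw [Multiset.map_cons, Multiset.prod_cons, map_mul, ih, embed211_X, monomial_mul, one_mul,
      expSum_cons]
    exact congrArg (monomial · 1) (Finsupp.ext fun _ => rfl)

theorem embed211_prod_eq_iff {m₁ m₂ : Multiset (Fin 12)} :
    embed211 k (m₁.map X).prod = embed211 k (m₂.map X).prod ↔ expSum m₁ = expSum m₂ := by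
  rw [embed211_prod, embed211_prod, monomial_left_inj one_ne_zero, Equiv.apply_eq_iff_eq]

theorem minorIdeal_le_ker_embed211 : minorIdeal k omegaIdx ≤ RingHom.ker (embed211 k) := by
  rw [minorIdeal, Ideal.span_le]
  rintro _ ⟨i, i', j, j', rfl⟩
  have := embed211_prod_eq_iff (k := k) (m₁ := omegaIdx i j ::ₘ omegaIdx i' j' ::ₘ 0)
    (m₂ := omegaIdx i j' ::ₘ omegaIdx i' j ::ₘ 0)
  simp only [Multiset.map_cons, Multiset.map_zero, Multiset.prod_cons, Multiset.prod_zero, mul_one,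
    expSum_cons, expSum_zero, add_zero] at this
  rw [SetLike.mem_coe, RingHom.mem_ker, map_sub, sub_eq_zero]
  exact this.mpr (expVec_add_minor i i' j j')

end Embedding

/-- The toric ideal of the embedding of `X = P¹ × P¹ × P¹` in `P¹¹` by
the twelve monomials of multidegree `(2,1,1)` is generated by the `2 × 2` minors of the
matrix `[[y₀,y₁,y₄,y₅],[y₂,y₃,y₆,y₇],[y₄,y₅,y₈,y₉],[y₆,y₇,y₁₀,y₁₁]]`; in particular
`O_X(2,1,1)` is determinantally presented. -/
theorem P1P1P1_211_detPresented (k : Type) [Field k] :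
    RingHom.ker (embed211 k).toRingHom =
      Ideal.span {q : MvPolynomial (Fin 12) k |
        ∃ (i i' j j' : Fin 4),
          q = X (omegaIdx i j) * X (omegaIdx i' j') -
              X (omegaIdx i j') * X (omegaIdx i' j)} := by
  refine le_antisymm ?_ minorIdeal_le_ker_embed211
  refine ker_le_of_forall_prod_X_sub_mem (embed211 k) (fun f => ⟨_, embed211_X f⟩) ?_
  intro m₁ m₂ h
  exact Ideal.Quotient.eq.mp (mk_prod_X_eq_of_expSum_eq (embed211_prod_eq_iff.mp h))

end
end
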